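/- Let G be a chordal graph with a simplicial vertex x_1 whose closed neighborhood is {x_1, …, x_r} with r ≥ 2, and let H_i = G \ N[x_i]. Then im(G) = max{ im(H_1), max{ im(H_i) + 1 : i = 2, …, r } }. -/

import Mathlib

open Finset

variable {V : Type} [Fintype V] [DecidableEq V]

/-- The closed neighborhood `N[v]` of a vertex, as a `Finset`. -/
def closedNbhd (G : SimpleGraph V) [DecidableRel G.Adj] (v : V) : Finset V :=
  insert v (G.neighborFinset v)

/-- The graph `G \ A` obtained by deleting the vertices in `A` (keeping them as
isolated vertices on the same vertex set). -/
def deleteVerts (G : SimpleGraph V) (A : Finset V) : SimpleGraph V where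
  Adj u v := G.Adj u v ∧ u ∉ A ∧ v ∉ A
  symm := ⟨fun u v h => ⟨h.1.symm, h.2.2, h.2.1⟩⟩
  loopless := ⟨fun u h => G.loopless.irrefl u h.1⟩

/-- `C` is a vertex cover of `G`. -/
def IsVertexCover (G : SimpleGraph V) (C : Finset V) : Prop :=
  ∀ ⦃u v : V⦄, G.Adj u v → u ∈ C ∨ v ∈ C

/-- `C` is a minimal vertex cover of `G`. -/
def IsMinVertexCover (G : SimpleGraph V) (C : Finset V) : Prop :=
  IsVertexCover G C ∧ ∀ D : Finset V, D ⊂ C → ¬ IsVertexCover G D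

/-- A graph is chordal if it has no induced cycle of length greater than `3`. -/
def IsChordal (G : SimpleGraph V) : Prop :=
  ∀ n : ℕ, 4 ≤ n → ∀ f : ZMod n → V, Function.Injective f →
    ¬ (∀ i j : ZMod n, G.Adj (f i) (f j) ↔ j = i + 1 ∨ i = j + 1)

/-- `S` is an independent set of `G`. -/
def IsIndepSet (G : SimpleGraph V) (S : Finset V) : Prop :=
  ∀ ⦃u : V⦄, u ∈ S → ∀ ⦃v : V⦄, v ∈ S → ¬ G.Adj u v

/-- `S` is a maximal independent set of `G`. -/
def IsMaxIndepSet (G : SimpleGraph V) (S : Finset V) : Prop :=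
  IsIndepSet G S ∧ ∀ T : Finset V, IsIndepSet G T → S ⊆ T → S = T

/-- `F` is a maximal clique of `G`, i.e. a facet of the clique complex `Δ(G)`. -/
def IsMaxCliqueF (G : SimpleGraph V) (F : Finset V) : Prop :=
  G.IsClique ↑F ∧ ∀ F' : Finset V, G.IsClique ↑F' → F ⊆ F' → F = F'

/-- `M` is an induced matching of `G`: a set of edges of `G` such that no edge of `G`
joins a vertex of one member to a vertex of a different member. -/
def IsInducedMatching (G : SimpleGraph V) (M : Finset (Sym2 V)) : Prop :=
  (∀ e ∈ M, e ∈ G.edgeSet) ∧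
    ∀ e ∈ M, ∀ f ∈ M, e ≠ f → ∀ u v : V, u ∈ e → v ∈ f → ¬ G.Adj u v

/-- The induced matching number `im(G)`. -/
noncomputable def inducedMatchingNumber (G : SimpleGraph V) : ℕ :=
  sSup {n | ∃ M : Finset (Sym2 V), IsInducedMatching G M ∧ M.card = n}

/-- The graph `G` has no edges. -/
def NoEdges (G : SimpleGraph V) : Prop := ∀ u v : V, ¬ G.Adj u v

open MvPolynomial in
/-- The squarefree monomial `∏_{v ∈ C} x_v` associated to a set of vertices. -/
noncomputable def coverMonomial (K : Type) [Field K] (C : Finset V) : MvPolynomial V K :=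
  ∏ v ∈ C, X v

open MvPolynomial in
/-- The cover ideal `J(G)`, generated by the monomials of the minimal vertex covers. -/
noncomputable def coverIdeal (K : Type) [Field K] (G : SimpleGraph V) : Ideal (MvPolynomial V K) :=
  Ideal.span {m | ∃ C : Finset V, IsMinVertexCover G C ∧ m = coverMonomial K C}

open MvPolynomial in
/-- The edge ideal `I(G)`. -/
noncomputable def edgeIdeal (K : Type) [Field K] (G : SimpleGraph V) : Ideal (MvPolynomial V K) :=
  Ideal.span {m | ∃ u v : V, G.Adj u v ∧ m = X u * X v}

open MvPolynomial in
/-- `m` is a linear quotients ordering: each successive colon ideal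
`(m_1, …, m_{i-1}) : m_i` is generated by a subset of the variables. -/
def IsLinQuotOrd {K : Type} [Field K] {ι : Type} [LinearOrder ι]
    (m : ι → MvPolynomial V K) : Prop :=
  ∀ i : ι, ∃ T : Set V,
    (Ideal.span (m '' {j | j < i})).colon (Ideal.span {m i}) =
      Ideal.span ((fun v => (X v : MvPolynomial V K)) '' T)

/-!
Take a maximum induced matching `M` of `G` and a vertex `v`. If no edge of `M` meets `N[v]`,
then `M` is an induced matching of `G \ N[v]`. Otherwise some edge `e ∈ M` contains a neighbour
`u` of `v`, and `M \ {e}` is an induced matching of `G \ N[u]`. Conversely, when `N[v]` is a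
clique every neighbour `u` of `v` has `N[v] ⊆ N[u]`, so the edge `vu` can be added to any
induced matching of `G \ N[u]`.
-/

variable {G : SimpleGraph V}

section
omit [Fintype V] [DecidableEq V]

lemma mem_edgeSet_deleteVerts {A : Finset V} {e : Sym2 V} :
    e ∈ (deleteVerts G A).edgeSet ↔ e ∈ G.edgeSet ∧ ∀ u ∈ e, u ∉ A := by
  induction e using Sym2.ind with
  | _ a b => simp [deleteVerts]

namespace IsInducedMatching

lemma empty (G : SimpleGraph V) : IsInducedMatching G ∅ := by
  simp [IsInducedMatching]

lemma subset {M N : Finset (Sym2 V)} (hM : IsInducedMatching G M) (hNM : N ⊆ M) :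
    IsInducedMatching G N :=
  ⟨fun e he => hM.1 e (hNM he), fun e he f hf => hM.2 e (hNM he) f (hNM hf)⟩

lemma of_deleteVerts {A : Finset V} {M : Finset (Sym2 V)}
    (hM : IsInducedMatching (deleteVerts G A) M) : IsInducedMatching G M := by
  refine ⟨fun e he => (mem_edgeSet_deleteVerts.mp (hM.1 e he)).1, ?_⟩
  intro e he f hf hef u w hu hw hadj
  exact hM.2 e he f hf hef u w hu hw ⟨hadj, (mem_edgeSet_deleteVerts.mp (hM.1 e he)).2 u hu,
    (mem_edgeSet_deleteVerts.mp (hM.1 f hf)).2 w hw⟩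

lemma deleteVerts_of_notMem {A : Finset V} {M : Finset (Sym2 V)} (hM : IsInducedMatching G M)
    (hA : ∀ e ∈ M, ∀ u ∈ e, u ∉ A) : IsInducedMatching (deleteVerts G A) M :=
  ⟨fun e he => mem_edgeSet_deleteVerts.mpr ⟨hM.1 e he, hA e he⟩,
    fun e he f hf hef u w hu hw hadj => hM.2 e he f hf hef u w hu hw hadj.1⟩

end IsInducedMatching

end

section
omit [DecidableEq V]

lemma bddAbove_card_isInducedMatching (G : SimpleGraph V) :
    BddAbove {n | ∃ M : Finset (Sym2 V), IsInducedMatching G M ∧ M.card = n} :=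
  ⟨Fintype.card (Sym2 V), by rintro n ⟨M, -, rfl⟩; exact M.card_le_univ⟩

lemma IsInducedMatching.card_le_inducedMatchingNumber {M : Finset (Sym2 V)}
    (hM : IsInducedMatching G M) : M.card ≤ inducedMatchingNumber G :=
  le_csSup (bddAbove_card_isInducedMatching G) ⟨M, hM, rfl⟩

lemma exists_isInducedMatching_card_eq (G : SimpleGraph V) :
    ∃ M : Finset (Sym2 V), IsInducedMatching G M ∧ M.card = inducedMatchingNumber G :=
  Nat.sSup_mem (s := {n | ∃ M : Finset (Sym2 V), IsInducedMatching G M ∧ M.card = n})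
    ⟨0, ∅, IsInducedMatching.empty G, rfl⟩ (bddAbove_card_isInducedMatching G)

lemma inducedMatchingNumber_deleteVerts_le (A : Finset V) :
    inducedMatchingNumber (deleteVerts G A) ≤ inducedMatchingNumber G := by
  obtain ⟨M, hM, hcard⟩ := exists_isInducedMatching_card_eq (deleteVerts G A)
  exact hcard ▸ hM.of_deleteVerts.card_le_inducedMatchingNumber

end

variable [DecidableRel G.Adj]

lemma mem_closedNbhd {u v : V} : u ∈ closedNbhd G v ↔ u = v ∨ G.Adj v u := by
  simp [closedNbhd]

lemma IsInducedMatching.erase_deleteVerts_closedNbhd {M : Finset (Sym2 V)}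
    (hM : IsInducedMatching G M) {e : Sym2 V} (he : e ∈ M) {u : V} (hu : u ∈ e) :
    IsInducedMatching (deleteVerts G (closedNbhd G u)) (M.erase e) := by
  obtain ⟨y, rfl⟩ := Sym2.mem_iff_exists.mp hu
  have huy : G.Adj u y := hM.1 _ he
  refine (hM.subset (M.erase_subset _)).deleteVerts_of_notMem fun f hf w hw hwu => ?_
  have hfe := (Finset.mem_erase.mp hf).1.symm
  rcases mem_closedNbhd.mp hwu with rfl | hadj
  · exact hM.2 _ he f (M.mem_of_mem_erase hf) hfe y w (Sym2.mem_mk_right _ _) hw huy.symm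
  · exact hM.2 _ he f (M.mem_of_mem_erase hf) hfe u w hu hw hadj

lemma exists_mem_neighborFinset_of_mem_closedNbhd {e : Sym2 V} (he : e ∈ G.edgeSet) {u v : V}
    (hu : u ∈ e) (huv : u ∈ closedNbhd G v) : ∃ w ∈ e, w ∈ G.neighborFinset v := by
  rcases mem_closedNbhd.mp huv with rfl | hadj
  · obtain ⟨y, rfl⟩ := Sym2.mem_iff_exists.mp hu
    exact ⟨y, Sym2.mem_mk_right _ _, (G.mem_neighborFinset _ _).mpr he⟩
  · exact ⟨u, hu, (G.mem_neighborFinset _ _).mpr hadj⟩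

theorem inducedMatchingNumber_le_max (v : V) :
    inducedMatchingNumber G ≤
      max (inducedMatchingNumber (deleteVerts G (closedNbhd G v)))
        ((G.neighborFinset v).sup
          fun u => inducedMatchingNumber (deleteVerts G (closedNbhd G u)) + 1) := by
  obtain ⟨M, hM, hcard⟩ := exists_isInducedMatching_card_eq G
  rw [← hcard]
  by_cases hdisj : ∀ e ∈ M, ∀ u ∈ e, u ∉ closedNbhd G v
  · exact le_max_of_le_left (hM.deleteVerts_of_notMem hdisj).card_le_inducedMatchingNumber
  push Not at hdisj
  obtain ⟨e, he, u, hu, huv⟩ := hdisj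
  obtain ⟨w, hw, hwv⟩ := exists_mem_neighborFinset_of_mem_closedNbhd (hM.1 e he) hu huv
  calc M.card = (M.erase e).card + 1 := (M.card_erase_add_one he).symm
    _ ≤ inducedMatchingNumber (deleteVerts G (closedNbhd G w)) + 1 :=
      Nat.add_le_add_right (hM.erase_deleteVerts_closedNbhd he hw).card_le_inducedMatchingNumber 1
    _ ≤ _ := Finset.le_sup
      (f := fun u => inducedMatchingNumber (deleteVerts G (closedNbhd G u)) + 1) hwv
    _ ≤ _ := le_max_right _ _

lemma inducedMatchingNumber_deleteVerts_add_one_le {u w : V} (huw : G.Adj u w) {A : Finset V}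
    (hu : closedNbhd G u ⊆ A) (hw : closedNbhd G w ⊆ A) :
    inducedMatchingNumber (deleteVerts G A) + 1 ≤ inducedMatchingNumber G := by
  obtain ⟨M, hM, hcard⟩ := exists_isInducedMatching_card_eq (deleteVerts G A)
  have hMG := hM.of_deleteVerts
  have hfar : ∀ f ∈ M, ∀ a ∈ s(u, w), ∀ b ∈ f, ¬ G.Adj a b := by
    intro f hf a ha b hb hab
    refine (mem_edgeSet_deleteVerts.mp (hM.1 f hf)).2 b hb ?_
    rcases Sym2.mem_iff.mp ha with rfl | rfl
    · exact hu (mem_closedNbhd.mpr (.inr hab))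
    · exact hw (mem_closedNbhd.mpr (.inr hab))
  have hnew : s(u, w) ∉ M := fun h =>
    (mem_edgeSet_deleteVerts.mp (hM.1 _ h)).2 u (Sym2.mem_mk_left _ _)
      (hu (mem_closedNbhd.mpr (.inl rfl)))
  have hins : IsInducedMatching G (insert s(u, w) M) := by
    refine ⟨fun f hf => ?_, fun f hf g hg hfg a b ha hb => ?_⟩
    · rcases Finset.mem_insert.mp hf with rfl | hf
      exacts [huw, hMG.1 f hf]
    rcases Finset.mem_insert.mp hf with rfl | hf <;> rcases Finset.mem_insert.mp hg with rfl | hg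
    · exact absurd rfl hfg
    · exact hfar g hg a ha b hb
    · exact fun hab => hfar f hf b hb a ha hab.symm
    · exact hMG.2 f hf g hg hfg a b ha hb
  rw [← hcard, ← Finset.card_insert_of_notMem hnew]
  exact hins.card_le_inducedMatchingNumber

lemma closedNbhd_subset_closedNbhd_of_isClique {v w : V}
    (hv : G.IsClique (closedNbhd G v : Set V)) (hw : w ∈ closedNbhd G v) :
    closedNbhd G v ⊆ closedNbhd G w := fun a ha => by
  by_cases haw : a = w
  · exact mem_closedNbhd.mpr (.inl haw)
  · exact mem_closedNbhd.mpr (.inr (hv hw ha (Ne.symm haw)))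

theorem inducedMatchingNumber_eq_max_of_isClique_closedNbhd {v : V}
    (hv : G.IsClique (closedNbhd G v : Set V)) :
    inducedMatchingNumber G =
      max (inducedMatchingNumber (deleteVerts G (closedNbhd G v)))
        ((G.neighborFinset v).sup
          fun u => inducedMatchingNumber (deleteVerts G (closedNbhd G u)) + 1) := by
  refine le_antisymm (inducedMatchingNumber_le_max v)
    (max_le (inducedMatchingNumber_deleteVerts_le _) (Finset.sup_le fun u hu => ?_))
  have hvu : G.Adj v u := (G.mem_neighborFinset _ _).mp hu
  exact inducedMatchingNumber_deleteVerts_add_one_le hvu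
    (closedNbhd_subset_closedNbhd_of_isClique hv (mem_closedNbhd.mpr (.inr hvu))) subset_rfl

lemma neighborFinset_eq_image_erase {r : ℕ} {x : Fin r → V} (hx : Function.Injective x)
    (i : Fin r) (hN : closedNbhd G (x i) = Finset.image x Finset.univ) :
    G.neighborFinset (x i) = (Finset.univ.erase i).image x := by
  rw [Finset.image_erase hx, ← hN, closedNbhd, Finset.erase_insert (by simp)]

/-- Recursion for the induced matching number of a chordal graph with a simplicial
vertex. -/
theorem stmt_17 {V : Type} [Fintype V] [DecidableEq V] (G : SimpleGraph V)
    [DecidableRel G.Adj]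
    (r : ℕ) (hr : 2 ≤ r) (x : Fin r → V) (hx : Function.Injective x)
    (hN : closedNbhd G (x ⟨0, by omega⟩) = Finset.image x Finset.univ)
    (hcl : G.IsClique ((closedNbhd G (x ⟨0, by omega⟩)) : Set V)) :
    inducedMatchingNumber G =
      max (inducedMatchingNumber (deleteVerts G (closedNbhd G (x ⟨0, by omega⟩))))
        ((Finset.univ.erase (⟨0, by omega⟩ : Fin r)).sup
          (fun t => inducedMatchingNumber (deleteVerts G (closedNbhd G (x t))) + 1)) := by
  rw [inducedMatchingNumber_eq_max_of_isClique_closedNbhd hcl,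
    neighborFinset_eq_image_erase hx _ hN, Finset.sup_image]
  rfl
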